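/- Let μ_φ : ℝ^n → ℝ^m and μ_θ : ℝ^m → ℝ^n be piecewise-linear functions (the encoder mean and the decoder mean of a trained VAE), and let λ ∈ ℝ. Define the anomaly-region map A : ℝ^n → 2^{[n]} by A(x) = {i ∈ [n] : |x_i − (μ_θ(μ_φ(x)))_i| ≥ λ}. Then A has finite range, and for every S ⊆ [n], the preimage A^{−1}(S) is a finite union of convex sets, each an intersection of finitely many half-spaces of the form {x : c^⊤x ≤ d} or {x : c^⊤x < d}; in particular, A is a piecewise-assignment function in this generalized sense. -/
import Mathlib


/-- A polyhedron in `ℝ^n`: a set of the form `{x | Δx ≤ δ}` (componentwise inequality). -/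
def IsPolyhedron {n : ℕ} (P : Set (Fin n → ℝ)) : Prop :=
  ∃ (m : ℕ) (Δ : Matrix (Fin m) (Fin n) ℝ) (δ : Fin m → ℝ), P = {x | Δ.mulVec x ≤ δ}

/-- A piecewise-linear function `ℝ^n → ℝ^m`: there are finitely many polyhedra covering
`ℝ^n` on each of which the function is affine, `f(x) = Ψ_k x + ψ_k`. -/
def IsPiecewiseLinear {n m : ℕ} (f : (Fin n → ℝ) → (Fin m → ℝ)) : Prop :=
  ∃ (K : ℕ) (P : Fin K → Set (Fin n → ℝ)) (Ψ : Fin K → Matrix (Fin m) (Fin n) ℝ)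
    (ψ : Fin K → Fin m → ℝ),
    (∀ k, IsPolyhedron (P k)) ∧ (∀ x, ∃ k, x ∈ P k) ∧
    ∀ k, ∀ x ∈ P k, f x = (Ψ k).mulVec x + ψ k

open Matrix

/-- A (closed or open) half-space `{x | c^⊤x ≤ d}` or `{x | c^⊤x < d}` in `ℝ^n`. -/
def IsHalfspace {n : ℕ} (H : Set (Fin n → ℝ)) : Prop :=
  ∃ (c : Fin n → ℝ) (d : ℝ), H = {x | c ⬝ᵥ x ≤ d} ∨ H = {x | c ⬝ᵥ x < d}

/-- An intersection of finitely many (closed or open) half-spaces in `ℝ^n`. -/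
def IsGenPolyhedron {n : ℕ} (P : Set (Fin n → ℝ)) : Prop :=
  ∃ (m : ℕ) (H : Fin m → Set (Fin n → ℝ)), (∀ j, IsHalfspace (H j)) ∧ P = ⋂ j, H j

/- ### Auxiliary lemmas -/

lemma halfspace_convex {n : ℕ} {H : Set (Fin n → ℝ)} (h : IsHalfspace H) : Convex ℝ H := by
  obtain ⟨c, d, h | h⟩ := h <;> subst h
  · exact convex_halfSpace_le ⟨fun x y => dotProduct_add c x y, fun a x => by
      simp [dotProduct_smul, smul_eq_mul]⟩ d
  · exact convex_halfSpace_lt ⟨fun x y => dotProduct_add c x y, fun a x => by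
      simp [dotProduct_smul, smul_eq_mul]⟩ d

lemma genPoly_convex {n : ℕ} {P : Set (Fin n → ℝ)} (h : IsGenPolyhedron P) : Convex ℝ P := by
  obtain ⟨m, H, hH, rfl⟩ := h
  exact convex_iInter fun j => halfspace_convex (hH j)

lemma genPoly_univ {n : ℕ} : IsGenPolyhedron (Set.univ : Set (Fin n → ℝ)) :=
  ⟨0, fun j => j.elim0, fun j => j.elim0, by simp⟩

lemma halfspace_genPoly {n : ℕ} {H : Set (Fin n → ℝ)} (h : IsHalfspace H) : IsGenPolyhedron H :=
  ⟨1, fun _ => H, fun _ => h, (Set.iInter_const H).symm⟩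

lemma genPoly_inter {n : ℕ} {P Q : Set (Fin n → ℝ)} (hP : IsGenPolyhedron P)
    (hQ : IsGenPolyhedron Q) : IsGenPolyhedron (P ∩ Q) := by
  obtain ⟨m1, H1, h1, rfl⟩ := hP
  obtain ⟨m2, H2, h2, rfl⟩ := hQ
  refine ⟨m1 + m2, Fin.append H1 H2, ?_, ?_⟩
  · intro j
    refine Fin.addCases (fun i => ?_) (fun i => ?_) j
    · simpa [Fin.append_left] using h1 i
    · simpa [Fin.append_right] using h2 i
  · ext x
    simp only [Set.mem_inter_iff, Set.mem_iInter]
    constructor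
    · rintro ⟨ha, hb⟩ j
      refine Fin.addCases (fun i => ?_) (fun i => ?_) j
      · simpa [Fin.append_left] using ha i
      · simpa [Fin.append_right] using hb i
    · intro h
      exact ⟨fun i => by simpa [Fin.append_left] using h (Fin.castAdd m2 i),
             fun i => by simpa [Fin.append_right] using h (Fin.natAdd m1 i)⟩

lemma iInter_fin_succ {α : Type*} {K : ℕ} (f : Fin (K + 1) → Set α) :
    (⋂ k, f k) = f 0 ∩ ⋂ i : Fin K, f i.succ := by
  ext x
  simp [Set.mem_iInter, Fin.forall_fin_succ]

lemma iUnion_fin_succ {α : Type*} {K : ℕ} (f : Fin (K + 1) → Set α) :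
    (⋃ k, f k) = f 0 ∪ ⋃ i : Fin K, f i.succ := by
  ext x
  simp [Set.mem_iUnion, Fin.exists_fin_succ]

lemma genPoly_iInter {n K : ℕ} {C : Fin K → Set (Fin n → ℝ)}
    (h : ∀ k, IsGenPolyhedron (C k)) : IsGenPolyhedron (⋂ k, C k) := by
  induction K with
  | zero => simpa using genPoly_univ
  | succ K ih =>
      rw [iInter_fin_succ]
      exact genPoly_inter (h 0) (ih fun i => h i.succ)

/-- Finite unions of generalized polyhedra. -/
def NiceSet {n : ℕ} (P : Set (Fin n → ℝ)) : Prop :=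
  ∃ (K : ℕ) (C : Fin K → Set (Fin n → ℝ)), (∀ k, IsGenPolyhedron (C k)) ∧ P = ⋃ k, C k

lemma genPoly_nice {n : ℕ} {P : Set (Fin n → ℝ)} (h : IsGenPolyhedron P) : NiceSet P :=
  ⟨1, fun _ => P, fun _ => h, (Set.iUnion_const P).symm⟩

lemma nice_union {n : ℕ} {P Q : Set (Fin n → ℝ)} (hP : NiceSet P) (hQ : NiceSet Q) :
    NiceSet (P ∪ Q) := by
  obtain ⟨K1, C1, h1, rfl⟩ := hP
  obtain ⟨K2, C2, h2, rfl⟩ := hQ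
  refine ⟨K1 + K2, Fin.append C1 C2, ?_, ?_⟩
  · intro j
    refine Fin.addCases (fun i => ?_) (fun i => ?_) j
    · simpa [Fin.append_left] using h1 i
    · simpa [Fin.append_right] using h2 i
  · ext x
    simp only [Set.mem_union, Set.mem_iUnion]
    constructor
    · rintro (⟨i, hi⟩ | ⟨i, hi⟩)
      · exact ⟨Fin.castAdd K2 i, by simpa [Fin.append_left] using hi⟩
      · exact ⟨Fin.natAdd K1 i, by simpa [Fin.append_right] using hi⟩
    · rintro ⟨j, hj⟩
      revert hj
      refine Fin.addCases (fun i hi => ?_) (fun i hi => ?_) j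
      · exact Or.inl ⟨i, by simpa [Fin.append_left] using hi⟩
      · exact Or.inr ⟨i, by simpa [Fin.append_right] using hi⟩

lemma nice_inter {n : ℕ} {P Q : Set (Fin n → ℝ)} (hP : NiceSet P) (hQ : NiceSet Q) :
    NiceSet (P ∩ Q) := by
  obtain ⟨K1, C1, h1, rfl⟩ := hP
  obtain ⟨K2, C2, h2, rfl⟩ := hQ
  refine ⟨K1 * K2, fun p => C1 (finProdFinEquiv.symm p).1 ∩ C2 (finProdFinEquiv.symm p).2,
    fun p => genPoly_inter (h1 _) (h2 _), ?_⟩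
  ext x
  simp only [Set.mem_inter_iff, Set.mem_iUnion]
  constructor
  · rintro ⟨⟨a, ha⟩, ⟨b, hb⟩⟩
    exact ⟨finProdFinEquiv (a, b), by simpa using ⟨ha, hb⟩⟩
  · rintro ⟨p, hp1, hp2⟩
    exact ⟨⟨_, hp1⟩, ⟨_, hp2⟩⟩

lemma nice_iUnion {n K : ℕ} {f : Fin K → Set (Fin n → ℝ)} (h : ∀ k, NiceSet (f k)) :
    NiceSet (⋃ k, f k) := by
  induction K with
  | zero => exact ⟨0, fun j => j.elim0, fun j => j.elim0, by simp⟩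
  | succ K ih =>
      rw [iUnion_fin_succ]
      exact nice_union (h 0) (ih fun i => h i.succ)

lemma nice_iInter {n K : ℕ} {f : Fin K → Set (Fin n → ℝ)} (h : ∀ k, NiceSet (f k)) :
    NiceSet (⋂ k, f k) := by
  induction K with
  | zero => simpa using genPoly_nice genPoly_univ
  | succ K ih =>
      rw [iInter_fin_succ]
      exact nice_inter (h 0) (ih fun i => h i.succ)

lemma halfspace_compl {n : ℕ} {H : Set (Fin n → ℝ)} (h : IsHalfspace H) : IsHalfspace Hᶜ := by
  obtain ⟨c, d, h | h⟩ := h <;> subst h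
  · refine ⟨-c, -d, Or.inr ?_⟩
    ext x; simp [neg_dotProduct, not_le, neg_lt_neg_iff]
  · refine ⟨-c, -d, Or.inl ?_⟩
    ext x; simp [neg_dotProduct, not_lt, neg_le_neg_iff]

lemma nice_compl {n : ℕ} {P : Set (Fin n → ℝ)} (h : NiceSet P) : NiceSet Pᶜ := by
  obtain ⟨K, C, hC, rfl⟩ := h
  rw [Set.compl_iUnion]
  refine nice_iInter fun k => ?_
  obtain ⟨m, H, hH, hCk⟩ := hC k
  rw [hCk, Set.compl_iInter]
  exact nice_iUnion fun j => genPoly_nice (halfspace_genPoly (halfspace_compl (hH j)))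

/-- Preimage of a polyhedron under an affine map is a generalized polyhedron. -/
lemma poly_affine_preimage {n m : ℕ} {P : Set (Fin m → ℝ)} (h : IsPolyhedron P)
    (M : Matrix (Fin m) (Fin n) ℝ) (b : Fin m → ℝ) :
    IsGenPolyhedron {x | M.mulVec x + b ∈ P} := by
  obtain ⟨m2, Δ, δ, rfl⟩ := h
  refine ⟨m2, fun r => {x | (Δ r ᵥ* M) ⬝ᵥ x ≤ δ r - Δ r ⬝ᵥ b}, fun r => ⟨_, _, Or.inl rfl⟩, ?_⟩
  ext x
  simp only [Set.mem_setOf_eq, Set.mem_iInter, Pi.le_def]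
  refine forall_congr' fun r => ?_
  have : Δ.mulVec (M.mulVec x + b) r = (Δ r ᵥ* M) ⬝ᵥ x + Δ r ⬝ᵥ b := by
    simp [Matrix.mulVec, dotProduct_add, dotProduct_mulVec]
  rw [this]
  constructor <;> intro <;> linarith

lemma poly_genPoly {n : ℕ} {P : Set (Fin n → ℝ)} (h : IsPolyhedron P) : IsGenPolyhedron P := by
  have := poly_affine_preimage h (1 : Matrix (Fin n) (Fin n) ℝ) 0
  simpa using this

/-- The set where an affine residual exceeds `lam` in absolute value is a union of
two halfspaces. -/
lemma abs_row_nice {n : ℕ} (M : Matrix (Fin n) (Fin n) ℝ) (b : Fin n → ℝ) (i : Fin n)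
    (lam : ℝ) : NiceSet {x | lam ≤ |x i - (M.mulVec x + b) i|} := by
  set c : Fin n → ℝ := Pi.single i 1 - M i with hc
  have hrw : ∀ x : Fin n → ℝ, x i - (M.mulVec x + b) i = c ⬝ᵥ x - b i := by
    intro x
    simp [hc, sub_dotProduct, single_dotProduct, Matrix.mulVec]
    ring
  refine ⟨2, fun k => {x | (if k = 0 then -c else c) ⬝ᵥ x ≤
      (if k = 0 then -(b i) - lam else b i - lam)}, ?_, ?_⟩
  · exact fun k => halfspace_genPoly ⟨_, _, Or.inl rfl⟩
  ext x
  simp only [Set.mem_setOf_eq, Set.mem_iUnion, Fin.exists_fin_two, if_pos, if_neg,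
    reduceIte, Fin.one_eq_zero_iff]
  rw [hrw x, le_abs]
  norm_num
  constructor
  · rintro (h | h)
    · exact Or.inl (by linarith)
    · exact Or.inr (by linarith)
  · rintro (h | h)
    · exact Or.inl (by linarith)
    · exact Or.inr (by linarith)

/-- the paper's Lemma 1: if the encoder mean `μφ : ℝ^n → ℝ^m` and the
decoder mean `μθ : ℝ^m → ℝ^n` are piecewise-linear, then the anomaly-region map
`A(x) = {i : |x_i - (μθ(μφ(x)))_i| ≥ λ}` has finite range and the preimage of every
`S ⊆ [n]` is a finite union of convex sets, each an intersection of finitely many closed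
or open half-spaces; i.e. `A` is a piecewise-assignment function in this generalized
sense. -/
theorem stmt_13 {n m : ℕ} (μφ : (Fin n → ℝ) → (Fin m → ℝ)) (μθ : (Fin m → ℝ) → (Fin n → ℝ))
    (hφ : IsPiecewiseLinear μφ) (hθ : IsPiecewiseLinear μθ)
    (lam : ℝ) (A : (Fin n → ℝ) → Finset (Fin n))
    (hA : ∀ x, A x = Finset.univ.filter (fun i => lam ≤ |x i - μθ (μφ x) i|)) :
    (Set.range A).Finite ∧
    ∀ S : Finset (Fin n), ∃ (K : ℕ) (C : Fin K → Set (Fin n → ℝ)),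
      (∀ k, Convex ℝ (C k) ∧ IsGenPolyhedron (C k)) ∧
      A ⁻¹' {S} = ⋃ k, C k := by
  refine ⟨Set.toFinite _, fun S => ?_⟩
  obtain ⟨K1, P, Ψ, ψ, hPpoly, hPcov, hPaff⟩ := hφ
  obtain ⟨K2, Q, Φm, φv, hQpoly, hQcov, hQaff⟩ := hθ
  -- Affine data of the composite map on each pair of pieces
  set Mm : Fin K1 → Fin K2 → Matrix (Fin n) (Fin n) ℝ := fun k j => Φm j * Ψ k with hMm
  set bb : Fin K1 → Fin K2 → (Fin n → ℝ) := fun k j => (Φm j).mulVec (ψ k) + φv j with hbb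
  set B : Fin K1 → Fin K2 → Fin n → Set (Fin n → ℝ) := fun k j i =>
    if i ∈ S then {x | lam ≤ |x i - ((Mm k j).mulVec x + bb k j) i|}
    else {x | lam ≤ |x i - ((Mm k j).mulVec x + bb k j) i|}ᶜ with hB
  set Piece : Fin K1 → Fin K2 → Set (Fin n → ℝ) := fun k j =>
    (P k ∩ {x | (Ψ k).mulVec x + ψ k ∈ Q j}) ∩ ⋂ i, B k j i with hPiece
  have hNicePiece : ∀ k j, NiceSet (Piece k j) := by
    intro k j
    refine nice_inter (genPoly_nice (genPoly_inter (poly_genPoly (hPpoly k))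
      (poly_affine_preimage (hQpoly j) (Ψ k) (ψ k)))) (nice_iInter fun i => ?_)
    by_cases hiS : i ∈ S
    · simpa [hB, hiS] using abs_row_nice (Mm k j) (bb k j) i lam
    · simpa [hB, hiS] using nice_compl (abs_row_nice (Mm k j) (bb k j) i lam)
  -- Key composite formula on each piece
  have hcomp : ∀ (k : Fin K1) (j : Fin K2) (x : Fin n → ℝ), x ∈ P k →
      (Ψ k).mulVec x + ψ k ∈ Q j → μθ (μφ x) = (Mm k j).mulVec x + bb k j := by
    intro k j x hk hq
    have hφx : μφ x = (Ψ k).mulVec x + ψ k := hPaff k x hk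
    have hq' : μφ x ∈ Q j := by rw [hφx]; exact hq
    have hθx : μθ (μφ x) = (Φm j).mulVec (μφ x) + φv j := hQaff j _ hq'
    rw [hθx, hφx]
    simp [hMm, hbb, Matrix.mulVec_add, Matrix.mulVec_mulVec, add_assoc]
  have key : A ⁻¹' {S} = ⋃ k, ⋃ j, Piece k j := by
    ext x
    simp only [Set.mem_preimage, Set.mem_singleton_iff, Set.mem_iUnion]
    constructor
    · intro hx
      obtain ⟨k, hk⟩ := hPcov x
      obtain ⟨j, hj⟩ := hQcov (μφ x)
      have hφx : μφ x = (Ψ k).mulVec x + ψ k := hPaff k x hk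
      have hq : (Ψ k).mulVec x + ψ k ∈ Q j := by rw [← hφx]; exact hj
      have hMb := hcomp k j x hk hq
      have hiff : ∀ i, i ∈ S ↔ lam ≤ |x i - ((Mm k j).mulVec x + bb k j) i| := by
        intro i
        rw [← hx, hA, ← hMb]
        simp
      refine ⟨k, j, ⟨hk, hq⟩, ?_⟩
      rw [Set.mem_iInter]
      intro i
      by_cases hiS : i ∈ S
      · simpa [hB, hiS] using (hiff i).mp hiS
      · simp only [hB, hiS, if_false, Set.mem_compl_iff, Set.mem_setOf_eq]
        exact fun hcon => hiS ((hiff i).mpr hcon)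
    · rintro ⟨k, j, ⟨⟨hk, hq⟩, hBmem⟩⟩
      have hMb := hcomp k j x hk hq
      rw [hA]
      ext i
      rw [Set.mem_iInter] at hBmem
      have := hBmem i
      simp only [Finset.mem_filter, Finset.mem_univ, true_and]
      rw [hMb]
      by_cases hiS : i ∈ S
      · simp only [hB, hiS, if_true, Set.mem_setOf_eq] at this
        exact ⟨fun _ => hiS, fun _ => this⟩
      · simp only [hB, hiS, if_false, Set.mem_compl_iff, Set.mem_setOf_eq] at this
        exact ⟨fun h => absurd h this, fun h => absurd h hiS⟩
  obtain ⟨K, C, hC, hCU⟩ := nice_iUnion fun k => nice_iUnion fun j => hNicePiece k j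
  exact ⟨K, C, fun k => ⟨genPoly_convex (hC k), hC k⟩, by rw [key, hCU]⟩
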